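/- arXiv:1503.06092 — 3 statements merged into one kernel-verified Lean document; each statement's English description precedes it below -/
import Mathlib

section
/- If S and G are semifilters and there is a finite-to-one function f : ω → ω such that A ∈ G iff f⁻¹[A] ∈ S, then 𝔱_S ≤ 𝔱_G, where 𝔱_S denotes the least cardinality of a ⊆*-chain in S having no lower bound in S. -/
/-!
Pulling a chain `F ⊆ G` back along `f` gives a chain `{f⁻¹ A | A ∈ F}` in `S` of cardinality at
most `#F`, since preimages under a finite-to-one map preserve `⊆*`. If that chain had a lower
bound `L ∈ S`, then `f '' L` would be a lower bound of `F`, and it lies in `G` because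
`L ⊆ f⁻¹ (f '' L)` puts `f⁻¹ (f '' L)` in `S`.
-/

open Cardinal

/-- `A ⊆* B`: almost-inclusion of subsets of ω. -/
def AlmostSub (A B : Set ℕ) : Prop := (A \ B).Finite

/-- A semifilter on ω: nonempty, proper, closed upwards under `⊆*`. -/
def IsSemifilter (S : Set (Set ℕ)) : Prop :=
  S.Nonempty ∧ S ≠ Set.univ ∧ ∀ A B : Set ℕ, A ∈ S → AlmostSub A B → B ∈ S

/-- `F` has a `⊆*`-lower bound belonging to `S`. -/
def HasLowerBoundIn (S F : Set (Set ℕ)) : Prop :=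
  ∃ A ∈ S, ∀ B ∈ F, AlmostSub A B

/-- `𝔱_S`: the least cardinality of a `⊆*`-chain in `S` with no lower bound in `S`. -/
noncomputable def tInv (S : Set (Set ℕ)) : Cardinal :=
  sInf {c | ∃ F : Set (Set ℕ), F ⊆ S ∧ IsChain AlmostSub F ∧
    ¬ HasLowerBoundIn S F ∧ c = #F}

theorem AlmostSub.of_subset {A B : Set ℕ} (h : A ⊆ B) : AlmostSub A B := by
  simp [AlmostSub, Set.sdiff_eq_empty.mpr h]

theorem AlmostSub.preimage {f : ℕ → ℕ} (hf : ∀ n, (f ⁻¹' {n}).Finite) {A B : Set ℕ}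
    (h : AlmostSub A B) : AlmostSub (f ⁻¹' A) (f ⁻¹' B) :=
  Set.Finite.preimage' (f := f) (s := A \ B) h fun n _ => hf n

theorem AlmostSub.image_of_preimage {f : ℕ → ℕ} {A B : Set ℕ} (h : AlmostSub A (f ⁻¹' B)) :
    AlmostSub (f '' A) B := by
  unfold AlmostSub at *
  rw [← Set.image_sdiff_preimage]
  exact h.image f

theorem tInv_le_mk {S F : Set (Set ℕ)} (hFS : F ⊆ S) (hF : IsChain AlmostSub F)
    (hFb : ¬ HasLowerBoundIn S F) : tInv S ≤ #F :=
  csInf_le' ⟨F, hFS, hF, hFb, rfl⟩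

section Pullback

variable {S G : Set (Set ℕ)} {f : ℕ → ℕ}

theorem preimages_subset_of_RB (hRB : ∀ A : Set ℕ, A ∈ G ↔ f ⁻¹' A ∈ S) {F : Set (Set ℕ)}
    (hFG : F ⊆ G) : (f ⁻¹' ·) '' F ⊆ S := by
  rintro _ ⟨A, hA, rfl⟩
  exact (hRB A).mp (hFG hA)

theorem HasLowerBoundIn.of_preimages_of_RB (hS : IsSemifilter S)
    (hRB : ∀ A : Set ℕ, A ∈ G ↔ f ⁻¹' A ∈ S) {F : Set (Set ℕ)}
    (h : HasLowerBoundIn S ((f ⁻¹' ·) '' F)) : HasLowerBoundIn G F := by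
  obtain ⟨L, hLS, hL⟩ := h
  refine ⟨f '' L, ?_, fun B hB => (hL _ ⟨B, hB, rfl⟩).image_of_preimage⟩
  exact (hRB _).mpr (hS.2.2 L _ hLS (.of_subset (Set.subset_preimage_image f L)))

end Pullback

theorem tInv_le_of_RB_general (S G : Set (Set ℕ)) (hS : IsSemifilter S)
    (f : ℕ → ℕ) (hfin : ∀ n : ℕ, (f ⁻¹' {n}).Finite)
    (hRB : ∀ A : Set ℕ, A ∈ G ↔ f ⁻¹' A ∈ S)
    (hWG : ∃ F : Set (Set ℕ), F ⊆ G ∧ IsChain AlmostSub F ∧ ¬ HasLowerBoundIn G F) :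
    tInv S ≤ tInv G := by
  obtain ⟨F₀, hF₀G, hF₀, hF₀b⟩ := hWG
  refine le_csInf ⟨#F₀, F₀, hF₀G, hF₀, hF₀b, rfl⟩ ?_
  rintro _ ⟨F, hFG, hF, hFb, rfl⟩
  calc tInv S ≤ #((f ⁻¹' ·) '' F) :=
        tInv_le_mk (preimages_subset_of_RB hRB hFG)
          (hF.image_of_map_rel _ _ (f ⁻¹' ·) fun _ _ => AlmostSub.preimage hfin)
          (mt (HasLowerBoundIn.of_preimages_of_RB hS hRB) hFb)
    _ ≤ #F := mk_image_le

/-- If `S ≥_RB G` via a finite-to-one `f`, then `𝔱_S ≤ 𝔱_G`.  (The hypothesis `hWG`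
reflects the standing assumption of the paper that unbounded chains in a semifilter
exist, so that `𝔱_G` is a genuine minimum.) -/
theorem tInv_le_of_RB (S G : Set (Set ℕ)) (hS : IsSemifilter S) (hG : IsSemifilter G)
    (f : ℕ → ℕ) (hfin : ∀ n : ℕ, (f ⁻¹' {n}).Finite)
    (hRB : ∀ A : Set ℕ, A ∈ G ↔ f ⁻¹' A ∈ S)
    (hWG : ∃ F : Set (Set ℕ), F ⊆ G ∧ IsChain AlmostSub F ∧ ¬ HasLowerBoundIn G F) :
    tInv S ≤ tInv G :=
  tInv_le_of_RB_general S G hS f hfin hRB hWG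
end

section
/- If S is a semifilter with the Ramsey property and F is an ultrafilter on S (a maximal filter on the partial order (S, ⊆*)), then F is an ultrafilter on [ω]^ω, i.e., for every infinite A ⊆ ω, either A ∈ F or ω \ A ∈ F. -/
/-- The Ramsey property: if `A ∈ S` is a finite union, some piece is in `S`. -/
def RamseyProp (S : Set (Set ℕ)) : Prop :=
  ∀ A ∈ S, ∀ (n : ℕ) (f : Fin n → Set ℕ), A = ⋃ i, f i → ∃ i, f i ∈ S

/-- A filter on the partial order `(S, ⊆*)`. -/
def FilterOn (S F : Set (Set ℕ)) : Prop :=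
  F.Nonempty ∧ F ⊆ S ∧ (∀ A ∈ F, ∀ B : Set ℕ, AlmostSub A B → B ∈ F) ∧
    ∀ A ∈ F, ∀ B ∈ F, A ∩ B ∈ F

/-- An ultrafilter on `S`: a maximal filter on `(S, ⊆*)`. -/
def UltrafilterOn (S F : Set (Set ℕ)) : Prop :=
  FilterOn S F ∧ ∀ F' : Set (Set ℕ), FilterOn S F' → F ⊆ F' → F' = F

/- If every member of `F` meets `A` in a member of `S`, then the sets almost containing some
`X ∩ A` with `X ∈ F` form a filter on `S` extending `F` and containing `A`; maximality of `F`
puts `A` in `F`. Otherwise some `X ∈ F` meets `A` outside `S`, and likewise for `Aᶜ`. The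
Ramsey property splits `X ∩ Y ∈ F ⊆ S` into its parts inside `A` and `Aᶜ`, one of which lies
in `S`, and then so does its superset `X ∩ A` or `Y ∩ Aᶜ`. -/

namespace AlmostSub

theorem of_subset_s14 {A B : Set ℕ} (h : A ⊆ B) : AlmostSub A B := by
  simp [AlmostSub, Set.sdiff_eq_empty.mpr h]

theorem trans {A B C : Set ℕ} (hAB : AlmostSub A B) (hBC : AlmostSub B C) : AlmostSub A C :=
  (hAB.union hBC).subset fun x hx => by
    by_cases hxB : x ∈ B
    · exact Or.inr ⟨hxB, hx.2⟩
    · exact Or.inl ⟨hx.1, hxB⟩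

theorem inter {A B C D : Set ℕ} (hAB : AlmostSub A B) (hCD : AlmostSub C D) :
    AlmostSub (A ∩ C) (B ∩ D) :=
  (hAB.union hCD).subset fun x ⟨⟨hxA, hxC⟩, hxBD⟩ => by
    by_cases hxB : x ∈ B
    · exact Or.inr ⟨hxC, fun hxD => hxBD ⟨hxB, hxD⟩⟩
    · exact Or.inl ⟨hxA, hxB⟩

end AlmostSub

theorem IsSemifilter.mem_of_subset {S : Set (Set ℕ)} (hS : IsSemifilter S) {A B : Set ℕ}
    (hA : A ∈ S) (hAB : A ⊆ B) : B ∈ S :=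
  hS.2.2 A B hA (.of_subset hAB)

theorem RamseyProp.inter_mem_or_inter_compl_mem {S : Set (Set ℕ)} (hR : RamseyProp S)
    {X : Set ℕ} (hX : X ∈ S) (A : Set ℕ) : X ∩ A ∈ S ∨ X ∩ Aᶜ ∈ S := by
  have hcover : X = ⋃ i, ![X ∩ A, X ∩ Aᶜ] i := by
    ext x
    simp only [Set.mem_iUnion, Fin.exists_fin_two, Matrix.cons_val_zero, Matrix.cons_val_one,
      Set.mem_inter_iff, Set.mem_compl_iff]
    tauto
  obtain ⟨i, hi⟩ := hR X hX 2 _ hcover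
  fin_cases i
  exacts [Or.inl hi, Or.inr hi]

def FilterOn.adjoin (F : Set (Set ℕ)) (A : Set ℕ) : Set (Set ℕ) :=
  {B | ∃ X ∈ F, AlmostSub (X ∩ A) B}

theorem FilterOn.filterOn_adjoin {S F : Set (Set ℕ)} (hS : IsSemifilter S) (hF : FilterOn S F)
    {A : Set ℕ} (hA : ∀ X ∈ F, X ∩ A ∈ S) : FilterOn S (FilterOn.adjoin F A) := by
  obtain ⟨⟨X₀, hX₀⟩, -, -, hFinter⟩ := hF
  refine ⟨⟨X₀ ∩ A, X₀, hX₀, .of_subset subset_rfl⟩, ?_, ?_, ?_⟩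
  · rintro B ⟨X, hX, hXB⟩
    exact hS.2.2 _ B (hA X hX) hXB
  · rintro B ⟨X, hX, hXB⟩ C hBC
    exact ⟨X, hX, hXB.trans hBC⟩
  · rintro B ⟨X, hX, hXB⟩ C ⟨Y, hY, hYC⟩
    refine ⟨X ∩ Y, hFinter X hX Y hY, ?_⟩
    rw [Set.inter_inter_distrib_right]
    exact hXB.inter hYC

theorem UltrafilterOn.mem_or_exists_inter_notMem {S F : Set (Set ℕ)} (hS : IsSemifilter S)
    (hF : UltrafilterOn S F) (A : Set ℕ) : A ∈ F ∨ ∃ X ∈ F, X ∩ A ∉ S := by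
  by_contra! h
  obtain ⟨hAF, hA⟩ := h
  have hsub : F ⊆ FilterOn.adjoin F A := fun X hX => ⟨X, hX, .of_subset Set.inter_subset_left⟩
  have hA_mem : A ∈ FilterOn.adjoin F A := by
    obtain ⟨X₀, hX₀⟩ := hF.1.1
    exact ⟨X₀, hX₀, .of_subset Set.inter_subset_right⟩
  exact hAF (hF.2 _ (hF.1.filterOn_adjoin hS hA) hsub ▸ hA_mem)

/-- (Glasner)  If `S` has the Ramsey property, every ultrafilter on `S` is an
ultrafilter on `[ω]^ω`. -/
theorem ultrafilterOn_ramsey_is_ultrafilter (S F : Set (Set ℕ))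
    (hS : IsSemifilter S) (hR : RamseyProp S) (hF : UltrafilterOn S F) :
    ∀ A : Set ℕ, A.Infinite → A ∈ F ∨ Aᶜ ∈ F := by
  intro A _
  rcases hF.mem_or_exists_inter_notMem hS A with hA | ⟨X, hX, hXA⟩
  · exact Or.inl hA
  rcases hF.mem_or_exists_inter_notMem hS Aᶜ with hAc | ⟨Y, hY, hYAc⟩
  · exact Or.inr hAc
  have hXY : X ∩ Y ∈ S := hF.1.2.1 (hF.1.2.2.2 X hX Y hY)
  exfalso
  rcases hR.inter_mem_or_inter_compl_mem hXY A with hA | hAc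
  · exact hXA (hS.mem_of_subset hA (Set.inter_subset_inter_left A Set.inter_subset_left))
  · exact hYAc (hS.mem_of_subset hAc (Set.inter_subset_inter_left Aᶜ Set.inter_subset_right))
end

section
/- Let G be a Gδ semifilter with the Ramsey property. Then G is countably Ramsey: whenever A ∈ G and A = ⋃_{n<ω} A_n, either some A_n ∈ G, or there exists B ⊆ A with B ∈ G such that B ∩ A_n is finite for every n. -/
def AlmostSubC (X Y : ℕ → Bool) : Prop :=
  ({n | X n = true} \ {n | Y n = true}).Finite

def IsSemifilterC (S : Set (ℕ → Bool)) : Prop :=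
  S.Nonempty ∧ S ≠ Set.univ ∧ ∀ X Y : ℕ → Bool, X ∈ S → AlmostSubC X Y → Y ∈ S

/-- The Ramsey property for a semifilter `G ⊆ 2^ω`: if `A ∈ G` is a finite union,
some piece is in `G`. -/
def RamseyPropC (G : Set (ℕ → Bool)) : Prop :=
  ∀ A ∈ G, ∀ (k : ℕ) (f : Fin k → ℕ → Bool),
    (∀ n : ℕ, A n = true ↔ ∃ i, f i n = true) → ∃ i, f i ∈ G

/-!
If no piece `Aᵢ` lies in `G`, the Ramsey property puts every remainder
`A \ (A₀ ∪ ⋯ ∪ Aₖ₋₁)` in `G`. A decreasing sequence in a `Gδ` semifilter `G = ⋂ₖ Uₖ` has a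
pseudo-intersection in `G`: glue the remainders along longer and longer initial segments, each
segment long enough that every point agreeing with the current stage on it lies in the open set
`Uₖ`, which is possible because every finite modification of the `k`-th remainder lies in `G`.
Intersected with `A`, this pseudo-intersection meets every `Aᵢ` finitely.
-/

open Filter Set PiNat

lemma IsOpen.exists_cylinder_subset {E : ℕ → Type*} [∀ n, TopologicalSpace (E n)]
    [∀ n, DiscreteTopology (E n)] {U : Set (∀ n, E n)} (hU : IsOpen U) {x : ∀ n, E n}
    (hx : x ∈ U) : ∃ n, cylinder x n ⊆ U := by
  obtain ⟨_, ⟨y, n, rfl⟩, hxy, hyU⟩ :=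
    (isTopologicalBasis_cylinders E).exists_subset_of_mem_open hx hU
  exact ⟨n, (mem_cylinder_iff_eq.1 hxy).subset.trans hyU⟩

namespace Fusion

variable (len : ℕ → (ℕ → Bool) → ℕ) (B : ℕ → ℕ → Bool)

def stage : ℕ → ℕ × (ℕ → Bool)
  | 0 => (0, B 0)
  | k + 1 =>
    let N := max ((stage k).1 + 1) (len k (stage k).2)
    (N, fun m => if m < N then (stage k).2 m else B (k + 1) m)

def threshold (k : ℕ) : ℕ := (stage len B k).1

def point (k : ℕ) : ℕ → Bool := (stage len B k).2

def diag (m : ℕ) : Bool := point len B m m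

variable {len B}

lemma len_le_threshold_succ (k : ℕ) : len k (point len B k) ≤ threshold len B (k + 1) :=
  le_max_right _ _

lemma point_succ_apply (k m : ℕ) : point len B (k + 1) m =
    if m < threshold len B (k + 1) then point len B k m else B (k + 1) m :=
  rfl

lemma strictMono_threshold : StrictMono (threshold len B) :=
  strictMono_nat_of_lt_succ fun _ => (lt_add_one _).trans_le (le_max_left _ _)

lemma point_apply_of_threshold_le {k m : ℕ} (hm : threshold len B k ≤ m) :
    point len B k m = B k m := by
  cases k with
  | zero => rfl
  | succ k => rw [point_succ_apply, if_neg hm.not_gt]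

lemma point_eventuallyEq (k : ℕ) : point len B k =ᶠ[atTop] B k :=
  eventually_atTop.2 ⟨_, fun _ => point_apply_of_threshold_le⟩

lemma point_apply_of_le {k j m : ℕ} (hkj : k ≤ j) (hm : m < threshold len B (k + 1)) :
    point len B j m = point len B k m := by
  induction j, hkj using Nat.le_induction with
  | base => rfl
  | succ j hkj ih =>
    have hmj : m < threshold len B (j + 1) :=
      hm.trans_le (strictMono_threshold.monotone (by omega))
    rw [point_succ_apply, if_pos hmj, ih]

lemma diag_mem_cylinder (k : ℕ) :
    diag len B ∈ cylinder (point len B k) (threshold len B (k + 1)) := by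
  intro m hm
  rcases le_total k m with hkm | hmk
  · exact point_apply_of_le hkm hm
  · exact (point_apply_of_le hmk ((lt_add_one m).trans_le (strictMono_threshold.id_le _))).symm

lemma point_apply_le (hB : Antitone B) {k j m : ℕ} (hkj : k ≤ j) (hm : threshold len B k ≤ m) :
    point len B j m ≤ B k m := by
  induction j, hkj using Nat.le_induction with
  | base => exact (point_apply_of_threshold_le hm).le
  | succ j hkj ih =>
    rw [point_succ_apply]
    split_ifs
    · exact ih
    · exact hB (by omega) m

lemma diag_eventuallyLE (hB : Antitone B) (k : ℕ) : diag len B ≤ᶠ[atTop] B k :=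
  eventually_atTop.2 ⟨max k (threshold len B k), fun _ hm =>
    point_apply_le hB (le_of_max_le_left hm) (le_of_max_le_right hm)⟩

end Fusion

theorem exists_mem_iInter_forall_eventuallyLE {U : ℕ → Set (ℕ → Bool)}
    (hU : ∀ k, IsOpen (U k)) {B : ℕ → ℕ → Bool} (hB : Antitone B)
    (hBU : ∀ k x, x =ᶠ[atTop] B k → x ∈ U k) : ∃ D ∈ ⋂ k, U k, ∀ k, D ≤ᶠ[atTop] B k := by
  have hcyl : ∀ k x, ∃ n, x ∈ U k → cylinder x n ⊆ U k := fun k x => by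
    by_cases hx : x ∈ U k
    · exact (hU k).exists_cylinder_subset hx |>.imp fun _ h _ => h
    · exact ⟨0, fun h => absurd h hx⟩
  choose len hlen using hcyl
  refine ⟨Fusion.diag len B, mem_iInter.2 fun k => ?_, Fusion.diag_eventuallyLE hB⟩
  exact hlen k _ (hBU k _ (Fusion.point_eventuallyEq k))
    (cylinder_anti _ (Fusion.len_le_threshold_succ k) (Fusion.diag_mem_cylinder k))

lemma almostSubC_iff_eventuallyLE {X Y : ℕ → Bool} : AlmostSubC X Y ↔ X ≤ᶠ[atTop] Y := by
  rw [← Nat.cofinite_eq_atTop, EventuallyLE, eventually_cofinite, AlmostSubC]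
  congr!
  ext n
  simp [Bool.le_iff_imp]

namespace IsSemifilterC

variable {G : Set (ℕ → Bool)}

lemma mem_of_eventuallyLE (hG : IsSemifilterC G) {X Y : ℕ → Bool} (hX : X ∈ G)
    (h : X ≤ᶠ[atTop] Y) : Y ∈ G :=
  hG.2.2 X Y hX (almostSubC_iff_eventuallyLE.2 h)

lemma mem_of_le (hG : IsSemifilterC G) {X Y : ℕ → Bool} (hX : X ∈ G) (h : X ≤ Y) : Y ∈ G :=
  hG.mem_of_eventuallyLE hX (Eventually.of_forall h)

lemma exists_mem_forall_eventuallyLE (hG : IsSemifilterC G) (hGδ : IsGδ G) {B : ℕ → ℕ → Bool}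
    (hB : Antitone B) (hBG : ∀ k, B k ∈ G) : ∃ D ∈ G, ∀ k, D ≤ᶠ[atTop] B k := by
  obtain ⟨U, hU, rfl⟩ := hGδ.eq_iInter_nat
  exact exists_mem_iInter_forall_eventuallyLE hU hB fun k x hx =>
    mem_iInter.1 (hG.mem_of_eventuallyLE (hBG k) hx.symm.le) k

lemma mem_or_mem_of_le_sup (hG : IsSemifilterC G) (hR : RamseyPropC G) {A X Y : ℕ → Bool}
    (hA : A ∈ G) (h : A ≤ X ⊔ Y) : X ∈ G ∨ Y ∈ G := by
  obtain ⟨i, hi⟩ := hR A hA 2 ![A ⊓ X, A ⊓ Y] fun n => by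
    have := h n
    simp only [Fin.exists_fin_two, Matrix.cons_val_zero, Matrix.cons_val_one, Pi.inf_apply,
      Pi.sup_apply] at this ⊢
    revert this
    cases A n <;> cases X n <;> cases Y n <;> simp
  fin_cases i
  · exact .inl (hG.mem_of_le hi inf_le_right)
  · exact .inr (hG.mem_of_le hi inf_le_right)

end IsSemifilterC

def remainder (A : ℕ → Bool) (f : ℕ → ℕ → Bool) : ℕ → ℕ → Bool
  | 0 => A
  | k + 1 => remainder A f k \ f k

lemma antitone_remainder (A : ℕ → Bool) (f : ℕ → ℕ → Bool) : Antitone (remainder A f) :=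
  antitone_nat_of_succ_le fun _ => sdiff_le

lemma remainder_mem {G : Set (ℕ → Bool)} (hG : IsSemifilterC G) (hR : RamseyPropC G)
    {A : ℕ → Bool} (hA : A ∈ G) {f : ℕ → ℕ → Bool} (hf : ∀ i, f i ∉ G) (k : ℕ) :
    remainder A f k ∈ G := by
  induction k with
  | zero => exact hA
  | succ k ih =>
    have hcover : remainder A f k ≤ remainder A f (k + 1) ⊔ f k :=
      le_sup_left.trans (sdiff_sup_self _ _).ge
    exact (hG.mem_or_mem_of_le_sup hR ih hcover).resolve_right (hf k)

/-- A `Gδ` semifilter with the Ramsey property is countably Ramsey: if `A ∈ G` is a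
countable union `⋃ₙ Aₙ`, then either some `Aₙ ∈ G`, or some `B ⊆ A` with `B ∈ G`
meets every `Aₙ` finitely. -/
theorem gdelta_countably_ramsey (G : Set (ℕ → Bool)) (hG : IsSemifilterC G)
    (hGδ : IsGδ G) (hR : RamseyPropC G) :
    ∀ A ∈ G, ∀ f : ℕ → ℕ → Bool,
      (∀ n : ℕ, A n = true ↔ ∃ i : ℕ, f i n = true) →
      (∃ i : ℕ, f i ∈ G) ∨
        ∃ B ∈ G, (∀ n : ℕ, B n = true → A n = true) ∧
          ∀ i : ℕ, {n | B n = true ∧ f i n = true}.Finite := by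
  intro A hA f _
  by_cases hf : ∃ i, f i ∈ G
  · exact .inl hf
  rw [not_exists] at hf
  obtain ⟨D, hDG, hD⟩ := hG.exists_mem_forall_eventuallyLE hGδ (antitone_remainder A f)
    (remainder_mem hG hR hA hf)
  refine .inr ⟨D ⊓ A, hG.mem_of_eventuallyLE hDG ?_, fun n hn => inf_le_right (a := D) n hn,
    fun i => ?_⟩
  · filter_upwards [hD 0] with n hn using le_inf le_rfl hn
  · have hDi := hD (i + 1)
    rw [← Nat.cofinite_eq_atTop, EventuallyLE, eventually_cofinite] at hDi
    refine hDi.subset fun n hn => ?_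
    have hDn : D n = true := inf_le_left (b := A) n hn.1
    rw [mem_ofPred_eq, remainder, Pi.sdiff_apply, hDn, hn.2]
    cases remainder A f i n <;> decide
end
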